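/- (Multiset version of Lemma on edge multiplicities, Section 5.) Let A and B be multisets of nonzero vectors of V, each of cardinality n, with A ≠ B, and suppose the elements of A span V. Let T be a multiset of nonzero vectors of V with T ≤ A and T ≤ B (as multisets) such that for every β ∈ T, the multisets A and B are congruent mod β. Then the cardinality of T is at most n − k + 1. (In the paper: if e is an edge of a G-colored graph of valence n over (Z_2)^k whose two endpoints p, q have different colorings α(E_p) ≠ α(E_q), then the number of edges joining p and q is at most n − k + 1.) -/

import Mathlib

/-- Two multisets of vectors of `V` are *congruent mod `ρ`* if their images under the
quotient map `V → V ⧸ span {ρ}` are equal as multisets. -/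
def CongMod {V : Type*} [AddCommGroup V] [Module (ZMod 2) V] (ρ : V)
    (A B : Multiset V) : Prop :=
  A.map ⇑(Submodule.span (ZMod 2) {ρ}).mkQ = B.map ⇑(Submodule.span (ZMod 2) {ρ}).mkQ

section Aux

variable {V : Type*} [AddCommGroup V] [Module (ZMod 2) V]

lemma zmod2_add_self (x : V) : x + x = 0 := by
  have h := two_smul (ZMod 2) x
  rw [show ((2 : ZMod 2)) = 0 by decide, zero_smul] at h
  exact h.symm

lemma mem_span_singleton_zmod2 {β x : V} :
    x ∈ Submodule.span (ZMod 2) {β} ↔ x = 0 ∨ x = β := by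
  rw [Submodule.mem_span_singleton]
  constructor
  · rintro ⟨c, rfl⟩
    fin_cases c
    · left; exact zero_smul (ZMod 2) β
    · right; exact one_smul (ZMod 2) β
  · rintro (rfl | rfl)
    · exact ⟨0, by simp⟩
    · exact ⟨1, by simp⟩

lemma count_congMod [DecidableEq V] {β : V} (hβ : β ≠ 0) {A B : Multiset V} (h : CongMod β A B) (v : V) :
    A.count v + A.count (v + β) = B.count v + B.count (v + β) := by
  classical
  have key : ∀ S : Multiset V,
      (S.map ⇑(Submodule.span (ZMod 2) {β}).mkQ).count ((Submodule.span (ZMod 2) {β}).mkQ v)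
        = S.count v + S.count (v + β) := by
    intro S
    rw [Multiset.count_map]
    have hpred : ∀ a ∈ S,
        ((Submodule.span (ZMod 2) {β}).mkQ v = (Submodule.span (ZMod 2) {β}).mkQ a)
          ↔ (v = a ∨ (v + β) = a) := by
      intro a _
      simp only [Submodule.mkQ_apply]
      rw [Submodule.Quotient.eq, mem_span_singleton_zmod2]
      constructor
      · rintro (hva | hva)
        · left; exact sub_eq_zero.mp hva
        · right
          have h2 : v = a + β := by rwa [sub_eq_iff_eq_add'] at hva
          rw [h2, add_assoc, zmod2_add_self, add_zero]
      · rintro (rfl | rfl)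
        · left; simp
        · right
          have h3 : v - (v + β) = -β := by abel
          rw [h3]
          exact neg_eq_of_add_eq_zero_left (zmod2_add_self β)
    rw [Multiset.filter_congr hpred]
    have hsplit := Multiset.filter_add_filter (fun a => v = a) (fun a => (v + β) = a) S
    have hand : S.filter (fun a => v = a ∧ (v + β) = a) = 0 := by
      rw [Multiset.filter_eq_nil]
      rintro a - ⟨rfl, hva⟩
      exact hβ (by rwa [add_eq_left] at hva)
    rw [Multiset.count_eq_card_filter_eq, Multiset.count_eq_card_filter_eq]
    have hc := congrArg Multiset.card hsplit
    rw [Multiset.card_add, Multiset.card_add, hand] at hc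
    simp only [Multiset.card_zero, add_zero] at hc
    exact hc.symm
  have h1 := key A
  have h2 := key B
  rw [h, h2] at h1
  exact h1.symm

end Aux

/-- If `A ≠ B` are multisets of nonzero vectors of cardinality `n` whose elements span `V`
(with `dim V = k`), and `T ≤ A`, `T ≤ B` is a multiset of nonzero vectors such that `A` and
`B` are congruent mod every `β ∈ T`, then `|T| ≤ n - k + 1`. -/
theorem edge_multiplicity_bound
    {V : Type*} [AddCommGroup V] [Module (ZMod 2) V] [FiniteDimensional (ZMod 2) V]
    (k n : ℕ) (hk : Module.finrank (ZMod 2) V = k)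
    (A B T : Multiset V)
    (hA0 : ∀ v ∈ A, v ≠ (0 : V)) (hB0 : ∀ v ∈ B, v ≠ (0 : V))
    (hT0 : ∀ v ∈ T, v ≠ (0 : V))
    (hcardA : Multiset.card A = n) (hcardB : Multiset.card B = n)
    (hAB : A ≠ B)
    (hspan : Submodule.span (ZMod 2) {v : V | v ∈ A} = ⊤)
    (hTA : T ≤ A) (hTB : T ≤ B)
    (hcong : ∀ β ∈ T, CongMod β A B) :
    Multiset.card T ≤ n - k + 1 := by
  classical
  rcases Multiset.empty_or_exists_mem T with hT | ⟨β₀, hβ₀T⟩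
  · simp [hT]
  set R : Multiset V := A - T with hRdef
  have hRA : R + T = A := tsub_add_cancel_of_le hTA
  set m : V → ℤ := fun v => (A.count v : ℤ) - (B.count v : ℤ) with hmdef
  have hm : ∀ β ∈ T, ∀ v, m (v + β) = - m v := by
    intro β hβ v
    have h1 := count_congMod (hT0 β hβ) (hcong β hβ) v
    simp only [hmdef]
    have h2 : ((A.count v : ℤ) + A.count (v + β)) = (B.count v : ℤ) + B.count (v + β) := by
      exact_mod_cast congrArg (Nat.cast (R := ℤ)) h1
    linarith
  have hmR : ∀ v, 0 < m v → v ∈ R := by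
    intro v hv
    have hBA : B.count v < A.count v := by
      simp only [hmdef] at hv
      have := sub_pos.mp hv
      exact_mod_cast this
    have hTB' : T.count v ≤ B.count v := Multiset.count_le_of_le v hTB
    have hA' : R.count v + T.count v = A.count v := by
      rw [← hRA]; simp [Multiset.count_add]
    have : 0 < R.count v := by omega
    exact Multiset.count_pos.mp this
  -- find v₀ with positive m
  obtain ⟨w, hw⟩ : ∃ v, m v ≠ 0 := by
    by_contra hc
    push_neg at hc
    apply hAB
    ext a
    have := hc a
    simp only [hmdef, sub_eq_zero] at this
    exact_mod_cast this
  obtain ⟨v₀, hv₀⟩ : ∃ v, 0 < m v := by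
    rcases lt_or_gt_of_ne hw with hneg | hpos
    · exact ⟨w + β₀, by rw [hm β₀ hβ₀T w]; linarith⟩
    · exact ⟨w, hpos⟩
  have hv₀R : v₀ ∈ R := hmR _ hv₀
  set U : Submodule (ZMod 2) V := Submodule.span (ZMod 2) {v : V | v ∈ R} with hUdef
  have claim1 : ∀ β ∈ T, β + β₀ ∈ U := by
    intro β hβ
    have h2 : m (v₀ + (β + β₀)) = m v₀ := by
      rw [← add_assoc, hm β₀ hβ₀T (v₀ + β), hm β hβ v₀, neg_neg]
    have mem2 : v₀ + (β + β₀) ∈ R := hmR _ (by rw [h2]; exact hv₀)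
    have hsub : (v₀ + (β + β₀)) - v₀ ∈ U :=
      Submodule.sub_mem _ (Submodule.subset_span mem2) (Submodule.subset_span hv₀R)
    simpa using hsub
  have claim2 : U ⊔ Submodule.span (ZMod 2) {β₀} = ⊤ := by
    rw [eq_top_iff, ← hspan, Submodule.span_le]
    intro a ha
    simp only [Set.mem_setOf_eq] at ha
    by_cases haR : a ∈ R
    · exact Submodule.mem_sup_left (Submodule.subset_span haR)
    · have haT : a ∈ T := by
        have h1 : 0 < A.count a := Multiset.count_pos.mpr ha
        have h2 : R.count a = 0 := Multiset.count_eq_zero.mpr haR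
        have h3 : R.count a + T.count a = A.count a := by
          rw [← hRA]; simp [Multiset.count_add]
        exact Multiset.count_pos.mp (by omega)
      have hrw : a = (a + β₀) + β₀ := by
        rw [add_assoc, zmod2_add_self, add_zero]
      rw [hrw]
      exact Submodule.add_mem _ (Submodule.mem_sup_left (claim1 a haT))
        (Submodule.mem_sup_right (Submodule.subset_span rfl))
  -- dimension count
  have hUfin : Module.finrank (ZMod 2) U ≤ Multiset.card R := by
    have hset : {v : V | v ∈ R} = (↑R.toFinset : Set V) := by
      ext x; simp
    rw [hUdef, hset]
    calc Module.finrank (ZMod 2) (Submodule.span (ZMod 2) (↑R.toFinset : Set V))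
        ≤ R.toFinset.card := by
          simpa using finrank_span_le_card (R := ZMod 2) (↑R.toFinset : Set V)
      _ ≤ Multiset.card R := R.toFinset_card_le
  have hWfin : Module.finrank (ZMod 2) (Submodule.span (ZMod 2) {β₀}) = 1 :=
    finrank_span_singleton (hT0 β₀ hβ₀T)
  have hkle : k ≤ Multiset.card R + 1 := by
    have h1 : Module.finrank (ZMod 2) (↑(U ⊔ Submodule.span (ZMod 2) {β₀}) : Submodule (ZMod 2) V)
        ≤ Module.finrank (ZMod 2) U + Module.finrank (ZMod 2) (Submodule.span (ZMod 2) {β₀}) :=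
      Submodule.finrank_add_le_finrank_add_finrank _ _
    rw [claim2, finrank_top, hk, hWfin] at h1
    omega
  have hcardR : Multiset.card R = n - Multiset.card T := by
    rw [hRdef, Multiset.card_sub hTA, hcardA]
  have hTn : Multiset.card T ≤ n := by
    rw [← hcardA]; exact Multiset.card_le_card hTA
  omega
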